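/- arXiv:1307.2388 — 2 statements merged into one kernel-verified Lean document; each statement's English description precedes it below -/
import Mathlib

section
/- Let k be a real closed field, let K = k(z) be the rational function field with the derivation d/dz (so the field of constants of K is k). Let L₁ = K(t₁) where t₁² = z and L₂ = K(t₂) where t₂² = −z, each equipped with the unique derivation extending that of K. Then L₁ and L₂ are both real Picard–Vessiot fields for the equation y′ = (1/(2z)) y over K. -/
/-- A derivation on a field `F`. -/
structure FieldDeriv (F : Type) [Field F] : Type where
  d : F → F
  map_add : ∀ a b : F, d (a + b) = d a + d b
  leibniz : ∀ a b : F, d (a * b) = a * d b + d a * b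

/-- A field is (formally) real if `-1` is not a sum of squares. -/
def IsFormallyRealField (F : Type) [Field F] : Prop :=
  ¬ IsSumSq (-1 : F)

/-- A field is real closed if it is real and no proper algebraic extension of it is real. -/
def IsRealClosedField (F : Type) [Field F] : Prop :=
  IsFormallyRealField F ∧
    ∀ (E : Type) [Field E] [Algebra F E], Algebra.IsAlgebraic F E →
      IsFormallyRealField E → Function.Surjective (algebraMap F E)

/-- `L/K`, with derivations `dL` extending `dK`, is a Picard--Vessiot field for `y' = A y`. -/
def IsPicardVessiot {K L : Type} [Field K] [Field L] [Algebra K L]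
    (dK : FieldDeriv K) (dL : FieldDeriv L) {n : ℕ}
    (A : Matrix (Fin n) (Fin n) K) : Prop :=
  (∀ a : K, dL.d (algebraMap K L a) = algebraMap K L (dK.d a)) ∧
  ∃ F : Matrix (Fin n) (Fin n) L, IsUnit F.det ∧
    (∀ i j, dL.d (F i j) = (A.map (algebraMap K L) * F) i j) ∧
    IntermediateField.adjoin K (Set.range fun q : Fin n × Fin n => F q.1 q.2) = ⊤ ∧
    ∀ x : L, dL.d x = 0 → ∃ a : K, dK.d a = 0 ∧ algebraMap K L a = x

/-!
Write `K = k(X)`, `e = u X` with `u = ±1` and `L = K(t)` with `t² = e`. Since `e` has odd degree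
it is not a square, so every element of `L` is uniquely `a + b t` with `a, b ∈ K`.
Differentiating `t² = e` gives `t' = t / (2X)`, so `a + b t` is constant only if `a' = 0` and
`(b² e)' = 0`; the constants of `k(X)` are `k` and `b² e` has odd degree unless `b = 0`.
A sum of squares in `L` has rational part in `ΣK² + e ΣK²`, so `-1 = S₁ + u X S₂` would hold
in `K`. Clearing denominators and substituting `X ↦ u X²` turns this into `q² + s = 0` in `k[X]`
with `q ≠ 0` and `s` a sum of squares, which is impossible: evaluating at every point of the
infinite field `k` would force `q = 0`.
-/

open Polynomial

instance IsSemireal.isFormallyReal {F : Type*} [Field F] [IsSemireal F] : IsFormallyReal F :=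
  .of_eq_zero_of_eq_zero_of_mul_self_add fun {s a} hs h => by
    by_contra ha
    refine IsSemireal.one_add_ne_zero (hs.mul (.mul_self a⁻¹)) ?_
    field_simp
    linear_combination h

theorem IsSumSq.map {R S F : Type*} [NonAssocSemiring R] [NonAssocSemiring S] [FunLike F R S]
    [RingHomClass F R S] (f : F) {s : R} (hs : IsSumSq s) : IsSumSq (f s) := by
  induction hs with
  | zero => simp
  | sq_add a _ ih => simpa using ih.sq_add (f a)

instance Polynomial.isFormallyReal {k : Type*} [Field k] [IsSemireal k] : IsFormallyReal k[X] :=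
  .of_eq_zero_of_eq_zero_of_mul_self_add fun {s q} hs h => Polynomial.funext fun c => by
    have hc : q.eval c * q.eval c + s.eval c = 0 := by simpa using congrArg (eval c) h
    simpa using IsFormallyReal.eq_zero_of_add_right (.mul_self _) (hs.map (evalRingHom c)) hc

theorem Polynomial.eq_zero_of_mul_self_add_add_C_mul_X_mul_eq_zero {k : Type*} [Field k]
    [IsSemireal k] {u : k} (hu : u ≠ 0) {q A B : k[X]} (hA : IsSumSq A) (hB : IsSumSq B)
    (h : q * q + A + C u * X * B = 0) : q = 0 := by
  -- The substitution `X ↦ u X²` turns `u X` into the square `(u X)²`.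
  have hσ : q.comp (C u * X ^ 2) * q.comp (C u * X ^ 2) + (A.comp (C u * X ^ 2)
      + C u * X * (C u * X) * B.comp (C u * X ^ 2)) = 0 := by
    have := congrArg (·.comp (C u * X ^ 2)) h
    simp only [add_comp, mul_comp, C_comp, X_comp, zero_comp] at this
    linear_combination this
  have hσq : q.comp (C u * X ^ 2) = 0 := by
    refine mul_self_eq_zero.mp <| IsFormallyReal.eq_zero_of_add_right (.mul_self _)
      (.add ?_ ((IsSumSq.mul_self _).mul ?_)) hσ
    · simpa using hA.map (compRingHom (C u * X ^ 2))
    · simpa using hB.map (compRingHom (C u * X ^ 2))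
  rcases comp_eq_zero_iff.mp hσq with hq | ⟨-, hc⟩
  · exact hq
  · simpa [hu] using congrArg natDegree hc

theorem IsSumSq.exists_algebraMap_eq_mul_sq {R K : Type*} [CommRing R] [IsDomain R] [Field K]
    [Algebra R K] [IsFractionRing R K] {S : K} (hS : IsSumSq S) :
    ∃ d P : R, d ≠ 0 ∧ IsSumSq P ∧ algebraMap R K P = S * algebraMap R K d ^ 2 := by
  induction hS with
  | zero => exact ⟨1, 0, one_ne_zero, .zero, by simp⟩
  | sq_add a _ ih =>
    obtain ⟨d, P, hd, hP, h⟩ := ih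
    obtain ⟨n, m, hm, rfl⟩ := IsFractionRing.div_surjective R a
    have hm0 : algebraMap R K m ≠ 0 := IsFractionRing.to_map_ne_zero_of_mem_nonZeroDivisors hm
    refine ⟨d * m, n * d * (n * d) + P * (m * m), mul_ne_zero hd (nonZeroDivisors.ne_zero hm),
      .sq_add _ (hP.mul (.mul_self m)), ?_⟩
    simp only [map_add, map_mul, h]
    field_simp

theorem RatFunc.one_add_add_C_mul_X_mul_ne_zero {k : Type*} [Field k] [IsSemireal k] {u : k}
    (hu : u ≠ 0) {S₁ S₂ : RatFunc k} (h₁ : IsSumSq S₁) (h₂ : IsSumSq S₂) :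
    1 + S₁ + RatFunc.C u * RatFunc.X * S₂ ≠ 0 := by
  intro h
  obtain ⟨d₁, P₁, hd₁, hP₁, e₁⟩ := h₁.exists_algebraMap_eq_mul_sq (R := k[X])
  obtain ⟨d₂, P₂, hd₂, hP₂, e₂⟩ := h₂.exists_algebraMap_eq_mul_sq (R := k[X])
  have hpoly : d₁ * d₂ * (d₁ * d₂) + P₁ * (d₂ * d₂)
      + Polynomial.C u * Polynomial.X * (P₂ * (d₁ * d₁)) = 0 := by
    apply RatFunc.algebraMap_injective k
    simp only [map_add, map_mul, e₁, e₂, RatFunc.algebraMap_C, RatFunc.algebraMap_X, map_zero]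
    linear_combination (algebraMap k[X] (RatFunc k) d₁ * algebraMap k[X] (RatFunc k) d₂) ^ 2 * h
  exact mul_ne_zero hd₁ hd₂ <| eq_zero_of_mul_self_add_add_C_mul_X_mul_eq_zero hu
    (hP₁.mul (.mul_self _)) (hP₂.mul (.mul_self _)) hpoly

theorem RatFunc.not_isSquare_of_odd_intDegree {k : Type*} [Field k] {e : RatFunc k}
    (he : Odd e.intDegree) : ¬ IsSquare e := by
  rintro ⟨r, rfl⟩
  rcases eq_or_ne r 0 with rfl | hr
  · simp at he
  · rw [RatFunc.intDegree_mul hr hr] at he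
    exact Int.not_even_iff_odd.mpr he ⟨_, rfl⟩

theorem RatFunc.eq_zero_of_mul_self_mul_eq_C {k : Type*} [Field k] {e b : RatFunc k} {c : k}
    (he : Odd e.intDegree) (h : b * b * e = RatFunc.C c) : b = 0 := by
  by_contra hb
  have he0 : e ≠ 0 := by rintro rfl; simp at he
  have := congrArg RatFunc.intDegree h
  rw [RatFunc.intDegree_mul (mul_ne_zero hb hb) he0, RatFunc.intDegree_mul hb hb,
    RatFunc.intDegree_C] at this
  obtain ⟨m, hm⟩ := he
  omega

section QuadraticExtension

variable {K L : Type*} [Field K] [Field L] [Algebra K L] {t : L} {e : K}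

theorem exists_eq_algebraMap_add_algebraMap_mul_of_sq_eq (ht : t ^ 2 = algebraMap K L e)
    (hgen : IntermediateField.adjoin K {t} = ⊤) (x : L) :
    ∃ a b : K, x = algebraMap K L a + algebraMap K L b * t := by
  have hint : IsIntegral K t := ⟨X ^ 2 - C e, monic_X_pow_sub_C e two_ne_zero, by simp [ht]⟩
  have hx : x ∈ Algebra.adjoin K {t} := by
    rw [← IntermediateField.adjoin_simple_toSubalgebra_of_isAlgebraic hint.isAlgebraic, hgen]
    trivial
  induction hx using Algebra.adjoin_induction with
  | mem y hy => exact ⟨0, 1, by simp [Set.mem_singleton_iff.mp hy]⟩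
  | algebraMap r => exact ⟨r, 0, by simp⟩
  | add y z _ _ hy hz =>
    obtain ⟨a, b, rfl⟩ := hy
    obtain ⟨c, d, rfl⟩ := hz
    exact ⟨a + c, b + d, by simp only [map_add]; ring⟩
  | mul y z _ _ hy hz =>
    obtain ⟨a, b, rfl⟩ := hy
    obtain ⟨c, d, rfl⟩ := hz
    refine ⟨a * c + e * b * d, a * d + b * c, ?_⟩
    simp only [map_add, map_mul]
    linear_combination (algebraMap K L b * algebraMap K L d) * ht

theorem eq_zero_and_eq_zero_of_algebraMap_add_algebraMap_mul_eq_zero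
    (ht : t ^ 2 = algebraMap K L e) (he : ¬ IsSquare e) {a b : K}
    (h : algebraMap K L a + algebraMap K L b * t = 0) : a = 0 ∧ b = 0 := by
  obtain rfl : b = 0 := by
    by_contra hb
    refine he ⟨-a / b, (algebraMap K L).injective ?_⟩
    have hbL : algebraMap K L b ≠ 0 := by simpa using hb
    have htab : t = algebraMap K L (-a / b) := by
      rw [map_div₀, map_neg]
      field_simp
      linear_combination h
    rw [← ht, htab, map_mul]
    ring
  simpa using h

theorem IsSumSq.exists_isSumSq_add_mul_isSumSq (ht : t ^ 2 = algebraMap K L e)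
    (hgen : IntermediateField.adjoin K {t} = ⊤) {s : L} (hs : IsSumSq s) :
    ∃ S₁ S₂ b : K, IsSumSq S₁ ∧ IsSumSq S₂ ∧
      s = algebraMap K L (S₁ + e * S₂) + algebraMap K L b * t := by
  induction hs with
  | zero => exact ⟨0, 0, 0, .zero, .zero, by simp⟩
  | sq_add x _ ih =>
    obtain ⟨S₁, S₂, c, h₁, h₂, rfl⟩ := ih
    obtain ⟨a, b, rfl⟩ := exists_eq_algebraMap_add_algebraMap_mul_of_sq_eq ht hgen x
    refine ⟨a * a + S₁, b * b + S₂, a * b + b * a + c, h₁.sq_add a, h₂.sq_add b, ?_⟩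
    simp only [map_add, map_mul]
    linear_combination (algebraMap K L b * algebraMap K L b) * ht

theorem isSemireal_of_sq_eq_algebraMap (ht : t ^ 2 = algebraMap K L e)
    (hgen : IntermediateField.adjoin K {t} = ⊤) (he : ¬ IsSquare e)
    (hreal : ∀ S₁ S₂ : K, IsSumSq S₁ → IsSumSq S₂ → 1 + S₁ + e * S₂ ≠ 0) : IsSemireal L := by
  refine .of_not_isSumSq_neg_one fun hs => ?_
  obtain ⟨S₁, S₂, b, h₁, h₂, hsum⟩ := hs.exists_isSumSq_add_mul_isSumSq ht hgen
  have hzero : algebraMap K L (1 + S₁ + e * S₂) + algebraMap K L b * t = 0 := by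
    rw [add_assoc, map_add, map_one]
    linear_combination -hsum
  exact hreal S₁ S₂ h₁ h₂
    (eq_zero_and_eq_zero_of_algebraMap_add_algebraMap_mul_eq_zero ht he hzero).1

end QuadraticExtension

section PicardVessiot

variable {K L : Type} [Field K] [Field L] [Algebra K L] [NeZero (2 : K)]
  {dK : FieldDeriv K} {dL : FieldDeriv L} {t : L} {e : K}

theorem isPicardVessiot_of_sq_eq_algebraMap (ht : t ^ 2 = algebraMap K L e)
    (hgen : IntermediateField.adjoin K {t} = ⊤) (he : ¬ IsSquare e)
    (hd : ∀ a : K, dL.d (algebraMap K L a) = algebraMap K L (dK.d a))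
    (hconst : ∀ b : K, dK.d (b * b * e) = 0 → b = 0) :
    IsPicardVessiot dK dL (Matrix.of fun _ _ : Fin 1 => dK.d e / (2 * e)) := by
  have he0 : e ≠ 0 := by rintro rfl; exact he .zero
  have ht0 : t ≠ 0 := by
    rintro rfl
    exact he0 (by simpa using ht.symm)
  have h2 : (2 : L) ≠ 0 := by
    rw [← map_ofNat (algebraMap K L) 2]
    exact (_root_.map_ne_zero _).mpr two_ne_zero
  have hdt : dL.d t = algebraMap K L (dK.d e / (2 * e)) * t := by
    have h2t : 2 * t * dL.d t = algebraMap K L (dK.d e) := by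
      rw [← hd, ← ht, sq, dL.leibniz]
      ring
    rw [map_div₀, map_mul, map_ofNat, ← ht, ← h2t]
    field_simp
  refine ⟨hd, Matrix.of fun _ _ => t, by simpa [Matrix.det_fin_one] using ht0, ?_, ?_, ?_⟩
  · simp [Matrix.mul_apply, hdt]
  · change IntermediateField.adjoin K (Set.range fun _ : Fin 1 × Fin 1 => t) = ⊤
    rwa [Set.range_const]
  · intro x hx
    obtain ⟨a, b, rfl⟩ := exists_eq_algebraMap_add_algebraMap_mul_of_sq_eq ht hgen x
    have hx' : algebraMap K L (dK.d a)
        + algebraMap K L (dK.d b + b * (dK.d e / (2 * e))) * t = 0 := by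
      rw [dL.map_add, dL.leibniz, hd, hd, hdt] at hx
      simp only [map_add, map_mul]
      linear_combination hx
    obtain ⟨ha, hb⟩ := eq_zero_and_eq_zero_of_algebraMap_add_algebraMap_mul_eq_zero ht he hx'
    obtain rfl : b = 0 := hconst b <| by
      rw [dK.leibniz, dK.leibniz]
      field_simp at hb
      linear_combination b * hb
    exact ⟨a, ha, by simp⟩

end PicardVessiot

def FieldDeriv.toDerivation {F : Type} [Field F] (R : Type*) [CommRing R] [Algebra R F]
    (D : FieldDeriv F) (hD : ∀ r : R, D.d (algebraMap R F r) = 0) : Derivation R F F :=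
  Derivation.mk'
    { toFun := D.d
      map_add' := D.map_add
      map_smul' := fun r x => by simp [Algebra.smul_def, D.leibniz, hD] }
    fun a b => by simp [D.leibniz, add_comm, mul_comm]

@[simp]
theorem FieldDeriv.toDerivation_apply {F : Type} [Field F] {R : Type*} [CommRing R] [Algebra R F]
    (D : FieldDeriv F) (hD : ∀ r : R, D.d (algebraMap R F r) = 0) (x : F) :
    D.toDerivation R hD x = D.d x :=
  rfl

section RationalFunctions

variable {k : Type} [Field k] {D : FieldDeriv (RatFunc k)}

theorem FieldDeriv.d_algebraMap_polynomial
    (hdC : ∀ c : k, D.d (algebraMap k (RatFunc k) c) = 0) (hdX : D.d RatFunc.X = 1) (p : k[X]) :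
    D.d (algebraMap k[X] (RatFunc k) p) = algebraMap k[X] (RatFunc k) (derivative p) := by
  have := (D.toDerivation k hdC).map_aeval p RatFunc.X
  simpa [RatFunc.aeval_X_left_eq_algebraMap, hdX] using this

theorem FieldDeriv.exists_C_eq_of_d_eq_zero [CharZero k]
    (hdC : ∀ c : k, D.d (algebraMap k (RatFunc k) c) = 0) (hdX : D.d RatFunc.X = 1)
    {f : RatFunc k} (hf : D.d f = 0) :
    ∃ c : k, RatFunc.C c = f := by
  have hcross : f.denom * derivative f.num = f.num * derivative f.denom := by
    apply RatFunc.algebraMap_injective k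
    have h := (D.toDerivation k hdC).leibniz_div (algebraMap _ _ f.num) (algebraMap _ _ f.denom)
    rw [RatFunc.num_div_denom, FieldDeriv.toDerivation_apply, FieldDeriv.toDerivation_apply,
      FieldDeriv.toDerivation_apply, hf, d_algebraMap_polynomial hdC hdX,
      d_algebraMap_polynomial hdC hdX, eq_comm, smul_eq_zero, sub_eq_zero] at h
    simpa [RatFunc.algebraMap_ne_zero f.denom_ne_zero] using h
  have hden : derivative f.denom = 0 := by
    by_contra hne
    have hdvd : f.denom ∣ derivative f.denom :=
      (RatFunc.isCoprime_num_denom f).symm.dvd_of_dvd_mul_left ⟨_, hcross.symm⟩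
    exact (degree_derivative_lt f.denom_ne_zero).not_ge (degree_le_of_dvd hdvd hne)
  have hden1 : f.denom = 1 :=
    eq_one_of_monic_natDegree_zero (RatFunc.monic_denom f) (derivative_eq_zero.mp hden)
  have hnum : derivative f.num = 0 := by simpa [hden1] using hcross
  refine ⟨f.num.coeff 0, ?_⟩
  conv_rhs => rw [← RatFunc.num_div_denom f]
  rw [hden1, map_one, div_one, eq_C_of_natDegree_eq_zero (derivative_eq_zero.mp hnum)]
  simp

theorem isPicardVessiot_and_isFormallyRealField_of_sq_eq_C_mul_X [IsSemireal k]
    (hdC : ∀ c : k, D.d (algebraMap k (RatFunc k) c) = 0) (hdX : D.d RatFunc.X = 1)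
    {L : Type} [Field L] [Algebra (RatFunc k) L] {dL : FieldDeriv L} {t : L} {u : k} (hu : u ≠ 0)
    (ht : t ^ 2 = algebraMap (RatFunc k) L (RatFunc.C u * RatFunc.X))
    (hgen : IntermediateField.adjoin (RatFunc k) {t} = ⊤)
    (hd : ∀ a : RatFunc k,
      dL.d (algebraMap (RatFunc k) L a) = algebraMap (RatFunc k) L (D.d a)) :
    IsPicardVessiot D dL (Matrix.of fun _ _ : Fin 1 => (2 * RatFunc.X : RatFunc k)⁻¹) ∧
      IsFormallyRealField L := by
  have hodd : Odd (RatFunc.C u * RatFunc.X).intDegree := by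
    rw [RatFunc.intDegree_mul (by simpa using hu) RatFunc.X_ne_zero, RatFunc.intDegree_C,
      RatFunc.intDegree_X]
    decide
  have hsq := RatFunc.not_isSquare_of_odd_intDegree hodd
  have hA : D.d (RatFunc.C u * RatFunc.X) / (2 * (RatFunc.C u * RatFunc.X))
      = (2 * RatFunc.X)⁻¹ := by
    have hu' : algebraMap k (RatFunc k) u ≠ 0 := (_root_.map_ne_zero _).mpr hu
    rw [D.leibniz, hdX, ← RatFunc.algebraMap_eq_C, hdC, zero_mul, add_zero]
    field_simp
  constructor
  · rw [← hA]
    refine isPicardVessiot_of_sq_eq_algebraMap ht hgen hsq hd fun b hb => ?_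
    obtain ⟨c, hc⟩ := D.exists_C_eq_of_d_eq_zero hdC hdX hb
    exact RatFunc.eq_zero_of_mul_self_mul_eq_C hodd hc.symm
  · have : IsSemireal L := isSemireal_of_sq_eq_algebraMap ht hgen hsq fun _ _ h₁ h₂ =>
      RatFunc.one_add_add_C_mul_X_mul_ne_zero hu h₁ h₂
    exact IsSemireal.not_isSumSq_neg_one L

end RationalFunctions

/-- Let `k` be real closed, `K = k(z)` with the derivation `d/dz`
(so the constants of `K` are exactly `k`), and let `L₁ = K(t₁)` with `t₁² = z` and
`L₂ = K(t₂)` with `t₂² = -z`, each with the unique derivation extending that of `K`.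
Then `L₁` and `L₂` are both real Picard--Vessiot fields for `y' = (1/(2z)) y` over `K`. -/
theorem sqrt_z_and_sqrt_neg_z_are_real_picard_vessiot
    (k : Type) [Field k] (hkrc : IsRealClosedField k)
    (dK : FieldDeriv (RatFunc k))
    (hdC : ∀ c : k, dK.d (algebraMap k (RatFunc k) c) = 0)
    (hdX : dK.d RatFunc.X = 1)
    (L₁ L₂ : Type) [Field L₁] [Field L₂]
    [Algebra (RatFunc k) L₁] [Algebra (RatFunc k) L₂]
    (t₁ : L₁) (t₂ : L₂)
    (ht₁ : t₁ ^ 2 = algebraMap (RatFunc k) L₁ RatFunc.X)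
    (ht₂ : t₂ ^ 2 = - algebraMap (RatFunc k) L₂ RatFunc.X)
    (hgen₁ : IntermediateField.adjoin (RatFunc k) ({t₁} : Set L₁) = ⊤)
    (hgen₂ : IntermediateField.adjoin (RatFunc k) ({t₂} : Set L₂) = ⊤)
    (d₁ : FieldDeriv L₁) (d₂ : FieldDeriv L₂)
    (hd₁ : ∀ a : RatFunc k, d₁.d (algebraMap (RatFunc k) L₁ a)
      = algebraMap (RatFunc k) L₁ (dK.d a))
    (hd₂ : ∀ a : RatFunc k, d₂.d (algebraMap (RatFunc k) L₂ a)
      = algebraMap (RatFunc k) L₂ (dK.d a)) :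
    (IsPicardVessiot dK d₁
        (Matrix.of fun _ _ : Fin 1 => (2 * RatFunc.X : RatFunc k)⁻¹) ∧
      IsFormallyRealField L₁) ∧
    (IsPicardVessiot dK d₂
        (Matrix.of fun _ _ : Fin 1 => (2 * RatFunc.X : RatFunc k)⁻¹) ∧
      IsFormallyRealField L₂) := by
  have : IsSemireal k := isSemireal_iff_not_isSumSq_neg_one.mpr hkrc.1
  refine ⟨isPicardVessiot_and_isFormallyRealField_of_sq_eq_C_mul_X hdC hdX one_ne_zero ?_
      hgen₁ hd₁,
    isPicardVessiot_and_isFormallyRealField_of_sq_eq_C_mul_X hdC hdX (neg_ne_zero.mpr one_ne_zero)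
      ?_ hgen₂ hd₂⟩
  · rwa [map_one, one_mul]
  · rwa [map_neg, map_one, neg_one_mul, map_neg]
end

section
/- Let G be a group, σ : G → G a group automorphism with σ ∘ σ = id, and Z a central subgroup of G with σ(Z) = Z such that: (i) the only element z ∈ Z with σ(z) = z is the identity, and (ii) for every x ∈ Z there exists y ∈ Z with x = y⁻¹·σ(y). Let σ̄ denote the automorphism of G/Z induced by σ. Define the cocycle set Z¹(G, σ) = {a ∈ G : a·σ(a) = 1}, with two cocycles a, a′ equivalent if and only if a′ = b⁻¹·a·σ(b) for some b ∈ G; define Z¹(G/Z, σ̄) and its equivalence relation analogously. Then the quotient homomorphism G → G/Z maps Z¹(G, σ) into Z¹(G/Z, σ̄), respects the equivalence relations, and induces a bijection between the set of equivalence classes of Z¹(G, σ) and the set of equivalence classes of Z¹(G/Z, σ̄). -/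
/-!
If `a` and `a'` become equivalent modulo `Z`, then `a'` differs from a conjugate `b⁻¹ a σ(b)`
by a central factor `y⁻¹ σ(y)`, which is absorbed by replacing `b` with `b y`. A cocycle `c`
of `G/Z` lifts to some `a` with `a σ(a) ∈ Z`; since this element is central,
`σ(a σ(a)) = σ(a) a = a⁻¹ (a σ(a)) a = a σ(a)`, so it is a fixed point of `σ` in `Z` and
hence `1`.
-/

/-- Two 1-cocycles `a, a'` for the two-element group `{1, σ}` with values in `G` are
equivalent iff `a' = b⁻¹ · a · σ(b)` for some `b ∈ G`. -/
def CocycleEquiv {G : Type} [Group G] (σ : G → G) (a a' : G) : Prop :=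
  ∃ b : G, a' = b⁻¹ * a * σ b

namespace CocycleEquiv

variable {G H : Type} [Group G] [Group H] {σ : G →* G} {a a' a'' : G}

theorem refl (a : G) : CocycleEquiv σ a a :=
  ⟨1, by simp⟩

theorem trans (h₁ : CocycleEquiv σ a a') (h₂ : CocycleEquiv σ a' a'') :
    CocycleEquiv σ a a'' := by
  obtain ⟨b, rfl⟩ := h₁
  obtain ⟨c, rfl⟩ := h₂
  exact ⟨b * c, by simp only [mul_inv_rev, map_mul, mul_assoc]⟩

theorem mul_coboundary_of_mem_center {y : G} (hy : y ∈ Subgroup.center G) (a : G) :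
    CocycleEquiv σ a (a * (y⁻¹ * σ y)) := by
  refine ⟨y, ?_⟩
  rw [← mul_assoc, (Subgroup.mem_center_iff.mp (Subgroup.inv_mem _ hy) a).symm]

theorem map {τ : H →* H} (f : G →* H) (hf : ∀ g, f (σ g) = τ (f g))
    (h : CocycleEquiv σ a a') : CocycleEquiv τ (f a) (f a') := by
  obtain ⟨b, rfl⟩ := h
  exact ⟨f b, by rw [map_mul, map_mul, map_inv, hf]⟩

end CocycleEquiv

section CentralExtension

variable {G H : Type} [Group G] [Group H] {σ : G →* G} {τ : H →* H}

theorem map_mul_apply_eq_one {f : G →* H} (hf : ∀ g, f (σ g) = τ (f g)) {a : G}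
    (ha : a * σ a = 1) : f a * τ (f a) = 1 := by
  rw [← hf, ← map_mul, ha, map_one]

theorem apply_mul_apply_fixed_of_mem_center (hσ : Function.Involutive σ) {a : G}
    (ha : a * σ a ∈ Subgroup.center G) : σ (a * σ a) = a * σ a := by
  have hcomm : a * (a * σ a) = a * (σ a * a) := by
    rw [← mul_assoc a (σ a) a]
    exact Subgroup.mem_center_iff.mp ha a
  rw [map_mul, hσ a]
  exact (mul_left_cancel hcomm).symm

theorem cocycleEquiv_of_map_cocycleEquiv {f : G →* H} (hf : ∀ g, f (σ g) = τ (f g))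
    (hsurj : Function.Surjective f)
    (hker : ∀ z ∈ f.ker, ∃ y ∈ Subgroup.center G, z = y⁻¹ * σ y) {a a' : G}
    (h : CocycleEquiv τ (f a) (f a')) : CocycleEquiv σ a a' := by
  obtain ⟨c, hc⟩ := h
  obtain ⟨b, rfl⟩ := hsurj c
  have hconj : f a' = f (b⁻¹ * a * σ b) := by rw [hc, map_mul, map_mul, map_inv, hf]
  obtain ⟨y, hy, hz⟩ := hker _ ((f.eq_iff).mp hconj)
  have ha' : a' = b⁻¹ * a * σ b * (y⁻¹ * σ y) := by rw [← hz, mul_inv_cancel_left]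
  rw [ha']
  exact CocycleEquiv.trans ⟨b, rfl⟩ (CocycleEquiv.mul_coboundary_of_mem_center hy _)

theorem exists_cocycle_map_eq {f : G →* H} (hf : ∀ g, f (σ g) = τ (f g))
    (hsurj : Function.Surjective f) (hσ : Function.Involutive σ)
    (hcenter : f.ker ≤ Subgroup.center G) (hfix : ∀ z ∈ f.ker, σ z = z → z = 1)
    {c : H} (hc : c * τ c = 1) : ∃ a : G, a * σ a = 1 ∧ f a = c := by
  obtain ⟨a, rfl⟩ := hsurj c
  have hker : a * σ a ∈ f.ker := by rw [f.mem_ker, map_mul, hf, hc]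
  exact ⟨a, hfix _ hker (apply_mul_apply_fixed_of_mem_center hσ (hcenter hker)), rfl⟩

end CentralExtension

/-- Let `G` be a group, `σ` an automorphism of `G` of order dividing 2,
and `Z` a central subgroup with `σ(Z) = Z` such that the only `σ`-fixed element of `Z` is
`1` and every element of `Z` has the form `y⁻¹σ(y)` with `y ∈ Z`.  Then the quotient map
`G → G/Z` maps 1-cocycles (`a·σ(a) = 1`) to 1-cocycles, respects cocycle equivalence, and
induces a bijection `H¹({1,σ}, G) → H¹({1,σ}, G/Z)` on equivalence classes of cocycles. -/
theorem cocycle_classes_bijection_central_quotient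
    (G : Type) [Group G] (σ : G ≃* G) (hσ2 : ∀ g : G, σ (σ g) = g)
    (Z : Subgroup G) (hZle : Z ≤ Subgroup.center G) (hZn : Z.Normal)
    (hZσ : ∀ z : G, z ∈ Z ↔ σ z ∈ Z)
    (hfix : ∀ z ∈ Z, σ z = z → z = 1)
    (hsplit : ∀ x ∈ Z, ∃ y ∈ Z, x = y⁻¹ * σ y) :
    let π : G →* G ⧸ Z := QuotientGroup.mk' Z
    let σb : G ⧸ Z →* G ⧸ Z :=
      QuotientGroup.map Z Z σ.toMonoidHom
        (fun z hz => Subgroup.mem_comap.mpr ((hZσ z).mp hz))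
    -- the quotient map sends cocycles to cocycles
    (∀ a : G, a * σ a = 1 → π a * σb (π a) = 1) ∧
    -- it respects the equivalence relations
    (∀ a a' : G, a * σ a = 1 → a' * σ a' = 1 →
      CocycleEquiv (⇑σ) a a' → CocycleEquiv (⇑σb) (π a) (π a')) ∧
    -- induced map on classes is injective
    (∀ a a' : G, a * σ a = 1 → a' * σ a' = 1 →
      CocycleEquiv (⇑σb) (π a) (π a') → CocycleEquiv (⇑σ) a a') ∧
    -- induced map on classes is surjective
    (∀ c : G ⧸ Z, c * σb c = 1 →
      ∃ a : G, a * σ a = 1 ∧ CocycleEquiv (⇑σb) (π a) c) := by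
  intro π σb
  have hπσ : ∀ g, π (σ.toMonoidHom g) = σb (π g) := fun _ => rfl
  have hsurj : Function.Surjective π := QuotientGroup.mk'_surjective Z
  have hker : π.ker = Z := QuotientGroup.ker_mk' Z
  refine ⟨fun a ha => map_mul_apply_eq_one hπσ ha,
    fun a a' _ _ h => h.map π hπσ,
    fun a a' _ _ h => cocycleEquiv_of_map_cocycleEquiv hπσ hsurj ?_ h,
    fun c hc => ?_⟩
  · rw [hker]
    intro z hz
    obtain ⟨y, hy, rfl⟩ := hsplit z hz
    exact ⟨y, hZle hy, rfl⟩
  · rw [← hker] at hZle hfix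
    obtain ⟨a, ha, rfl⟩ := exists_cocycle_map_eq hπσ hsurj hσ2 hZle hfix hc
    exact ⟨a, ha, CocycleEquiv.refl _⟩
end
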